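/- For all n ≥ 1 and d ≥ 1, the S_d-derivative in the variable x of the bivariate d-Hoggatt polynomial (x ⊕_d a)^{(n)} := Σ_{k=0}^n ⟨n choose k⟩_d x^{n-k} a^k equals ⟨n⟩_d · (x ⊕_d a)^{(n-1)}. -/

import Mathlib

open Polynomial

/-- The n-th simplicial d-polytopic number ⟨n⟩_d = C(n+d-1, d). -/
def sp (d n : ℕ) : ℕ := Nat.choose (n + d - 1) d

/-- The d-simplitorial ⟨n⟩_d! = ∏_{k=1}^n ⟨k⟩_d, as a rational number. -/
def spFact (d n : ℕ) : ℚ := ∏ k ∈ Finset.Icc 1 n, (sp d k : ℚ)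

/-- The d-Hoggatt binomial coefficient ⟨n choose k⟩_d. -/
def hog (d n k : ℕ) : ℚ := spFact d n / (spFact d k * spFact d (n - k))

/-- The S_d-derivative: the linear-in-coefficients operator on polynomials in x
determined by D_{S_d} x^n = ⟨n⟩_d x^{n-1}. -/
noncomputable def DSd (d : ℕ) (p : ℚ[X]) : ℚ[X] :=
  p.sum fun n a => C (a * (sp d n : ℚ)) * X ^ (n - 1)

/-- The bivariate d-Hoggatt polynomial (x ⊕_d a)^{(n)} = Σ_{k=0}^n ⟨n choose k⟩_d x^{n-k} a^k,
as a polynomial in x with a a constant parameter. -/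
noncomputable def bivarHoggatt (d n : ℕ) (a : ℚ) : ℚ[X] :=
  ∑ k ∈ Finset.range (n + 1), C (hog d n k * a ^ k) * X ^ (n - k)

/- Apply D_{S_d} termwise: on the monomial ⟨n+1 choose k⟩_d a^k x^{n+1-k} it produces the factor
⟨n+1-k⟩_d, and the Pascal-type identity ⟨n+1 choose k⟩_d ⟨n+1-k⟩_d = ⟨n+1⟩_d ⟨n choose k⟩_d turns the
result into ⟨n+1⟩_d times the monomial of (x ⊕_d a)^{(n)}. The constant term dies because ⟨0⟩_d = 0
for d ≥ 1. -/

lemma sp_zero {d : ℕ} (hd : 1 ≤ d) : sp d 0 = 0 :=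
  Nat.choose_eq_zero_of_lt (by omega)

lemma sp_pos (d : ℕ) {k : ℕ} (hk : 1 ≤ k) : 0 < sp d k :=
  Nat.choose_pos (by omega)

lemma spFact_ne_zero (d n : ℕ) : spFact d n ≠ 0 :=
  Finset.prod_ne_zero_iff.mpr fun _ hk =>
    Nat.cast_ne_zero.mpr (sp_pos d (Finset.mem_Icc.mp hk).1).ne'

lemma spFact_succ (d n : ℕ) : spFact d (n + 1) = spFact d n * sp d (n + 1) :=
  Finset.prod_Icc_succ_top (by omega) _

lemma hog_succ_mul_sp {d n k : ℕ} (hk : k ≤ n) :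
    hog d (n + 1) k * sp d (n + 1 - k) = sp d (n + 1) * hog d n k := by
  have hsp : (sp d (n - k + 1) : ℚ) ≠ 0 := Nat.cast_ne_zero.mpr (sp_pos d (by omega)).ne'
  have := spFact_ne_zero d k
  have := spFact_ne_zero d n
  have := spFact_ne_zero d (n - k)
  rw [hog, hog, Nat.sub_add_comm hk, spFact_succ, spFact_succ]
  field_simp

lemma DSd_add (d : ℕ) (p q : ℚ[X]) : DSd d (p + q) = DSd d p + DSd d q :=
  sum_add_index _ _ _ (fun _ => by simp) fun _ _ _ => by simp [add_mul]

lemma DSd_sum (d : ℕ) {ι : Type*} (s : Finset ι) (f : ι → ℚ[X]) :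
    DSd d (∑ i ∈ s, f i) = ∑ i ∈ s, DSd d (f i) :=
  map_sum (AddMonoidHom.mk' (DSd d) (DSd_add d)) f s

lemma DSd_C_mul_X_pow (d : ℕ) (c : ℚ) (m : ℕ) :
    DSd d (C c * X ^ m) = C (c * sp d m) * X ^ (m - 1) := by
  rw [DSd, C_mul_X_pow_eq_monomial, sum_monomial_index]
  simp

lemma DSd_bivarHoggatt_succ {d : ℕ} (hd : 1 ≤ d) (n : ℕ) (a : ℚ) :
    DSd d (bivarHoggatt d (n + 1) a) = C (sp d (n + 1) : ℚ) * bivarHoggatt d n a := by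
  rw [bivarHoggatt, DSd_sum, Finset.sum_range_succ, DSd_C_mul_X_pow, Nat.sub_self, sp_zero hd,
    Nat.cast_zero, mul_zero, C_0, zero_mul, add_zero, bivarHoggatt, Finset.mul_sum]
  refine Finset.sum_congr rfl fun k hk => ?_
  have hkn : k ≤ n := Nat.lt_succ_iff.mp (Finset.mem_range.mp hk)
  rw [DSd_C_mul_X_pow, ← mul_assoc, ← C_mul, show n + 1 - k - 1 = n - k by omega]
  congr 2
  linear_combination a ^ k * hog_succ_mul_sp (d := d) hkn

theorem DSd_bivarHoggatt_general (d n : ℕ) (hd : 1 ≤ d) (a : ℚ) :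
    DSd d (bivarHoggatt d n a) = C (sp d n : ℚ) * bivarHoggatt d (n - 1) a := by
  cases n with
  | zero => simpa [bivarHoggatt, sp_zero hd] using DSd_C_mul_X_pow d (hog d 0 0) 0
  | succ n => exact DSd_bivarHoggatt_succ hd n a

theorem DSd_bivarHoggatt (d n : ℕ) (hd : 1 ≤ d) (hn : 1 ≤ n) (a : ℚ) :
    DSd d (bivarHoggatt d n a) = C (sp d n : ℚ) * bivarHoggatt d (n - 1) a :=
  DSd_bivarHoggatt_general d n hd a
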